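/- arXiv:0804.1949 — 3 statements merged into one kernel-verified Lean document; each statement's English description precedes it below -/
import Mathlib

section
/- Let ψ' : ℝ → ℝ be nonnegative, periodic with period p' > 0, and let p > p'. Define ψ : ℝ → ℝ by ψ(x) = ψ'(x) for x ∈ [0, ⌊p/p'⌋·p'), ψ(x) = 0 for x ∈ [⌊p/p'⌋·p', p), extended p-periodically. Then (1 − p'/p) · (1/p')∫₀^{p'} ψ' ≤ (1/p)∫₀^{p} ψ ≤ (1/p')∫₀^{p'} ψ'. -/
/-!
On `[0, p)` the function `ψ` consists of `n = ⌊p/p'⌋` full periods of `ψ'` followed by zeros, so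
`∫₀^p ψ = n ∫₀^{p'} ψ'`. Both bounds then follow from `p - p' < n p' ≤ p` and `ψ' ≥ 0`.
-/

open MeasureTheory intervalIntegral Set

theorem intervalIntegral_eq_of_eqOn_Ico_of_eqOn_Ico_zero {E : Type*} [NormedAddCommGroup E]
    [NormedSpace ℝ E] {μ : Measure ℝ} [NullSingletonClass μ] {f g : ℝ → E} {a b c : ℝ}
    (hac : a ≤ c) (hcb : c ≤ b) (hf : IntervalIntegrable f μ a c)
    (hgf : EqOn g f (Ico a c)) (hg0 : EqOn g 0 (Ico c b)) :
    ∫ x in a..b, g x ∂μ = ∫ x in a..c, f x ∂μ := by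
  have hgf' : EqOn g f (Ioo a c) := hgf.mono Ioo_subset_Ico_self
  have hg0' : EqOn g 0 (Ioo c b) := hg0.mono Ioo_subset_Ico_self
  have hg_ac : IntervalIntegrable g μ a c := hf.congr_uIoo (uIoo_of_le hac ▸ hgf'.symm)
  have hg_cb : IntervalIntegrable g μ c b :=
    (IntervalIntegrable.zero (μ := μ)).congr_uIoo (uIoo_of_le hcb ▸ hg0'.symm)
  rw [← integral_add_adjacent_intervals hg_ac hg_cb, integral_congr_Ioo_of_le hac hgf',
    integral_congr_Ioo_of_le hcb hg0']
  simp

theorem Function.Periodic.intervalIntegral_zero_intCast_mul_eq {E : Type*} [NormedAddCommGroup E]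
    [NormedSpace ℝ E] {f : ℝ → E} {T : ℝ} (hf : Function.Periodic f T) (hT : 0 < T)
    (hint : IntervalIntegrable f volume 0 T) (n : ℤ) :
    ∫ x in (0 : ℝ)..n * T, f x = (n : ℝ) • ∫ x in (0 : ℝ)..T, f x := by
  simpa [zsmul_eq_mul, Int.cast_smul_eq_zsmul] using
    hf.intervalIntegral_add_zsmul_eq n 0 (hf.intervalIntegrable₀ hT.ne' hint)

theorem stmt_3_general (ψ' ψ : ℝ → ℝ) (p' p : ℝ) (hp' : 0 < p') (hpp' : p' < p)
    (hnn : ∀ x, 0 ≤ ψ' x) (hper' : Function.Periodic ψ' p')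
    (hint : IntervalIntegrable ψ' volume 0 p')
    (hψeq : ∀ x ∈ Set.Ico (0 : ℝ) ((⌊p / p'⌋ : ℝ) * p'), ψ x = ψ' x)
    (hψ0 : ∀ x ∈ Set.Ico ((⌊p / p'⌋ : ℝ) * p') p, ψ x = 0) :
    (1 - p' / p) * ((1 / p') * ∫ x in (0:ℝ)..p', ψ' x)
      ≤ (1 / p) * ∫ x in (0:ℝ)..p, ψ x ∧
    (1 / p) * (∫ x in (0:ℝ)..p, ψ x) ≤ (1 / p') * ∫ x in (0:ℝ)..p', ψ' x := by
  have hp : 0 < p := hp'.trans hpp'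
  set n : ℤ := ⌊p / p'⌋
  have hc_le : n * p' ≤ p := sub_nonneg.mp (Int.sub_floor_div_mul_nonneg p hp')
  have hc_gt : p - p' < n * p' := by linarith [Int.sub_floor_div_mul_lt p hp']
  have hc_nonneg : 0 ≤ (n : ℝ) * p' := by linarith
  have hmean : ∫ x in (0:ℝ)..p, ψ x = n * ∫ x in (0:ℝ)..p', ψ' x := by
    rw [intervalIntegral_eq_of_eqOn_Ico_of_eqOn_Ico_zero hc_nonneg hc_le
      (hper'.intervalIntegrable₀ hp'.ne' hint 0 _) hψeq hψ0,
      hper'.intervalIntegral_zero_intCast_mul_eq hp' hint, smul_eq_mul]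
  set I := ∫ x in (0:ℝ)..p', ψ' x
  have hI : 0 ≤ I := integral_nonneg hp'.le fun x _ ↦ hnn x
  rw [hmean]
  constructor
  · calc (1 - p' / p) * (1 / p' * I) = (p - p') * I / (p * p') := by field_simp
      _ ≤ (n * p') * I / (p * p') := by gcongr
      _ = 1 / p * (n * I) := by field_simp
  · calc 1 / p * (n * I) = (n * p') * I / (p * p') := by field_simp
      _ ≤ p * I / (p * p') := by gcongr
      _ = 1 / p' * I := by field_simp

/-- Mean-value estimate for the period-extension construction (Lemma 2.2):
the mean of the truncated/extended function ψ is between (1 - p'/p) times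
and one times the mean of the original p'-periodic function ψ'. -/
theorem stmt_3 (ψ' ψ : ℝ → ℝ) (p' p : ℝ) (hp' : 0 < p') (hpp' : p' < p)
    (hnn : ∀ x, 0 ≤ ψ' x) (hper' : Function.Periodic ψ' p')
    (hint : IntervalIntegrable ψ' volume 0 p')
    (hψeq : ∀ x ∈ Set.Ico (0 : ℝ) ((⌊p / p'⌋ : ℝ) * p'), ψ x = ψ' x)
    (hψ0 : ∀ x ∈ Set.Ico ((⌊p / p'⌋ : ℝ) * p') p, ψ x = 0)
    (hper : Function.Periodic ψ p) :
    (1 - p' / p) * ((1 / p') * ∫ x in (0:ℝ)..p', ψ' x)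
      ≤ (1 / p) * ∫ x in (0:ℝ)..p, ψ x ∧
    (1 / p) * (∫ x in (0:ℝ)..p, ψ x) ≤ (1 / p') * ∫ x in (0:ℝ)..p', ψ' x :=
  stmt_3_general ψ' ψ p' p hp' hpp' hnn hper' hint hψeq hψ0
end

section
/- Let k_{j−1} < k_j, n ∈ ℕ, and define X(1/2,3/4) = ⋃_{t∈ℤ} [(t+1/2)·2^{n+k_{j−1}}, (t+3/4)·2^{n+k_{j−1}}), split into X_e (t even) and X_o (t odd). Suppose x ∈ X_e, y ∈ X_o, x < y, and l = ⌊y⌋ − ⌊x⌋ > 0. Then ⌊x⌋ ∈ X_e, x + l ∈ X_o, and there exists t' ∈ ℤ with x + 2l ∈ [2t'·2^{n+k_{j−1}}, (2t'+1)·2^{n+k_{j−1}}). -/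
/-!
With `2 ^ m = 4 d`, every endpoint `(t + 1/2) 2^m = (4t+2) d`, `(t + 3/4) 2^m = (4t+3) d` is an
integer, so membership of a real `z` in such a block depends only on `⌊z⌋`. Since `l` is an
integer, `⌊x + l⌋ = ⌊y⌋` and `⌊x + 2l⌋ = 2⌊y⌋ - ⌊x⌋`, and all three claims become interval
arithmetic on the integers `⌊x⌋ ∈ [(4s+2)d, (4s+3)d)` and `⌊y⌋ ∈ [(4t+2)d, (4t+3)d)`:
then `2⌊y⌋ - ⌊x⌋ ∈ [(8t-4s)d, (8t-4s+4)d)`, and evenness of `s` makes `8t - 4s` a multiple of 8.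
-/

open Set

theorem Int.floor_mem_Ico_iff {R : Type*} [Ring R] [LinearOrder R] [FloorRing R] (x : R)
    (a b : ℤ) : ⌊x⌋ ∈ Ico a b ↔ x ∈ Ico (a : R) b := by
  simp only [mem_Ico, Int.le_floor, Int.floor_lt]

section FloorField

variable {K : Type*} [Field K] [LinearOrder K] [FloorRing K]

theorem mem_Ico_quarter_iff_floor_mem (x : K) (t d : ℤ) :
    x ∈ Ico (((t : K) + 1/2) * (4 * d)) (((t : K) + 3/4) * (4 * d)) ↔
      ⌊x⌋ ∈ Ico ((4 * t + 2) * d) ((4 * t + 3) * d) := by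
  rw [Int.floor_mem_Ico_iff]
  push_cast
  ring_nf

theorem mem_Ico_half_iff_floor_mem (x : K) (t d : ℤ) :
    x ∈ Ico ((2 * (t : K)) * (4 * d)) ((2 * (t : K) + 1) * (4 * d)) ↔
      ⌊x⌋ ∈ Ico (8 * t * d) ((8 * t + 4) * d) := by
  rw [Int.floor_mem_Ico_iff]
  push_cast
  ring_nf

end FloorField

theorem two_mul_sub_mem_Ico_of_mem_Ico {u v s t d : ℤ}
    (hv : v ∈ Ico ((4 * s + 2) * d) ((4 * s + 3) * d))
    (hu : u ∈ Ico ((4 * t + 2) * d) ((4 * t + 3) * d)) :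
    2 * u - v ∈ Ico ((8 * t - 4 * s) * d) ((8 * t - 4 * s + 4) * d) := by
  obtain ⟨hv₁, hv₂⟩ := hv
  obtain ⟨hu₁, hu₂⟩ := hu
  constructor <;> linarith

theorem stmt_8_general (m : ℕ) (hm : 2 ≤ m) (x y : ℝ)
    (hx : ∃ t : ℤ, Even t ∧
      x ∈ Set.Ico (((t : ℝ) + 1/2) * 2 ^ m) (((t : ℝ) + 3/4) * 2 ^ m))
    (hy : ∃ t : ℤ, Odd t ∧
      y ∈ Set.Ico (((t : ℝ) + 1/2) * 2 ^ m) (((t : ℝ) + 3/4) * 2 ^ m))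
    (l : ℤ) (hl : l = ⌊y⌋ - ⌊x⌋) :
    (∃ t : ℤ, Even t ∧
      (⌊x⌋ : ℝ) ∈ Set.Ico (((t : ℝ) + 1/2) * 2 ^ m) (((t : ℝ) + 3/4) * 2 ^ m)) ∧
    (∃ t : ℤ, Odd t ∧
      x + (l : ℝ) ∈ Set.Ico (((t : ℝ) + 1/2) * 2 ^ m) (((t : ℝ) + 3/4) * 2 ^ m)) ∧
    (∃ t' : ℤ, x + 2 * (l : ℝ) ∈
      Set.Ico ((2 * (t' : ℝ)) * 2 ^ m) ((2 * (t' : ℝ) + 1) * 2 ^ m)) := by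
  obtain ⟨d, hd⟩ : ∃ d : ℤ, (2 : ℝ) ^ m = 4 * d := ⟨2 ^ (m - 2), by
    push_cast
    rw [← pow_sub_mul_pow 2 hm]
    ring⟩
  simp only [hd, mem_Ico_quarter_iff_floor_mem, mem_Ico_half_iff_floor_mem] at hx hy ⊢
  obtain ⟨_, ⟨s, rfl⟩, hs⟩ := hx
  obtain ⟨t, ht, htm⟩ := hy
  refine ⟨⟨s + s, ⟨s, rfl⟩, by rwa [Int.floor_intCast]⟩, ⟨t, ht, ?_⟩, ⟨t - s, ?_⟩⟩
  · rwa [Int.floor_add_intCast, hl, add_sub_cancel]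
  · have hfloor : ⌊x + 2 * (l : ℝ)⌋ = 2 * ⌊y⌋ - ⌊x⌋ := by
      rw [← Int.cast_two, ← Int.cast_mul, Int.floor_add_intCast, hl]
      ring
    rw [hfloor]
    convert two_mul_sub_mem_Ico_of_mem_Ico hs htm using 3 <;> ring

/-- The parity mechanism preceding equation (22): with quarter segments
X_e (even t) and X_o (odd t) at scale c = 2^m, points x ∈ X_e, y ∈ X_o with
l = ⌊y⌋ - ⌊x⌋ > 0 satisfy ⌊x⌋ ∈ X_e, x + l ∈ X_o, and x + 2l lies in an
even-indexed block. -/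
theorem stmt_8 (m : ℕ) (hm : 2 ≤ m) (x y : ℝ)
    (hx : ∃ t : ℤ, Even t ∧
      x ∈ Set.Ico (((t : ℝ) + 1/2) * 2 ^ m) (((t : ℝ) + 3/4) * 2 ^ m))
    (hy : ∃ t : ℤ, Odd t ∧
      y ∈ Set.Ico (((t : ℝ) + 1/2) * 2 ^ m) (((t : ℝ) + 3/4) * 2 ^ m))
    (hxy : x < y) (l : ℤ) (hl : l = ⌊y⌋ - ⌊x⌋) (hlpos : 0 < l) :
    (∃ t : ℤ, Even t ∧
      (⌊x⌋ : ℝ) ∈ Set.Ico (((t : ℝ) + 1/2) * 2 ^ m) (((t : ℝ) + 3/4) * 2 ^ m)) ∧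
    (∃ t : ℤ, Odd t ∧
      x + (l : ℝ) ∈ Set.Ico (((t : ℝ) + 1/2) * 2 ^ m) (((t : ℝ) + 3/4) * 2 ^ m)) ∧
    (∃ t' : ℤ, x + 2 * (l : ℝ) ∈
      Set.Ico ((2 * (t' : ℝ)) * 2 ^ m) ((2 * (t' : ℝ) + 1) * 2 ^ m)) :=
  stmt_8_general m hm x y hx hy l hl
end

section
/- Let (Y_j, ℬ_j, μ_j, T_j), j ∈ ℕ, be probability-measure-preserving systems, and let Y = ∏_j Y_j with product measure μ and U(y)_j = T_j(y_j). Suppose for each j there are nonnegative measurable F_j, G_j on Y_j with μ_j{ y_j : sup_{l≥1} F_j(T_j^l y_j) G_j(T_j^{2l} y_j)/l ≥ c_j } > ε, where c_j → ∞. Define W(y) = Σ_j √β_j F_j(y_j) and Q(y) = Σ_j √β_j G_j(y_j) with β_j > 0. If β_j c_j → ∞, then μ{ y : sup_{l≥1} W(U^l y) Q(U^{2l} y)/l = ∞ } ≥ ε. -/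
/-!
Keeping only the `j`-th terms of `W` and `Q` gives
`W (U^l y) * Q (U^(2l) y) ≥ β_j * F_j (T_j^l y_j) * G_j (T_j^(2l) y_j)`,
so the maximal function `S` of `(W, Q)` is at least `β_j c_j` on the preimage
under `y ↦ y_j` of a set of `μ_j`-measure `> ε`. As `β_j c_j → ∞`, every
superlevel set `{n ≤ S}` has measure `≥ ε`, and these sets decrease to `{S = ∞}`.
-/

open MeasureTheory Filter ENNReal

section TailMaximal

variable {X : Type*}

noncomputable def tailMaximal (T : X → X) (f g : X → ℝ≥0∞) (x : X) : ℝ≥0∞ :=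
  ⨆ l : ℕ, ⨆ _ : 1 ≤ l, f (T^[l] x) * g (T^[2 * l] x) / (l : ℝ≥0∞)

theorem measurable_tailMaximal [MeasurableSpace X] {T : X → X} {f g : X → ℝ≥0∞}
    (hT : Measurable T) (hf : Measurable f) (hg : Measurable g) :
    Measurable (tailMaximal T f g) :=
  .iSup fun l => .iSup fun _ =>
    ((hf.comp (hT.iterate l)).mul (hg.comp (hT.iterate (2 * l)))).div_const _

theorem mul_mul_tailMaximal_le {X' : Type*} {T : X → X} {T' : X' → X'}
    {f g : X → ℝ≥0∞} {f' g' : X' → ℝ≥0∞} {x : X} {x' : X'} {a b : ℝ≥0∞}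
    (hf : ∀ l, a * f (T^[l] x) ≤ f' (T'^[l] x'))
    (hg : ∀ l, b * g (T^[l] x) ≤ g' (T'^[l] x')) :
    a * b * tailMaximal T f g x ≤ tailMaximal T' f' g' x' := by
  simp only [tailMaximal, ENNReal.mul_iSup]
  refine iSup₂_mono fun l _ => ?_
  rw [← mul_div_assoc, mul_mul_mul_comm]
  gcongr
  exacts [hf l, hg (2 * l)]

end TailMaximal

theorem le_measure_setOf_eq_top {α : Type*} [MeasurableSpace α] {μ : Measure α}
    [IsFiniteMeasure μ] {f : α → ℝ≥0∞} (hf : Measurable f) {ε : ℝ≥0∞}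
    (h : ∀ n : ℕ, ε ≤ μ {x | n ≤ f x}) : ε ≤ μ {x | f x = ⊤} := by
  have hInter : {x | f x = ⊤} = ⋂ n : ℕ, {x | (n : ℝ≥0∞) ≤ f x} := by
    ext x
    simp only [Set.mem_ofPred_eq, Set.mem_iInter]
    refine ⟨fun hx n => hx ▸ le_top, fun hx => ?_⟩
    by_contra hne
    obtain ⟨n, hn⟩ := ENNReal.exists_nat_gt hne
    exact (hx n).not_gt hn
  have hanti : Antitone fun n : ℕ => {x | (n : ℝ≥0∞) ≤ f x} :=
    fun _ _ hnm => Set.ofPred_subset_ofPred.2 fun _ => (Nat.cast_le.2 hnm).trans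
  rw [hInter, hanti.measure_iInter (fun _ => (hf measurableSet_Ici).nullMeasurableSet)
    ⟨0, measure_ne_top _ _⟩]
  exact le_iInf h

theorem mul_self_mul_tailMaximal_le_tailMaximal_tsum {ι : Type*} {Y : ι → Type*}
    (T : ∀ j, Y j → Y j) (w : ι → ℝ≥0∞) (F G : ∀ j, Y j → ℝ≥0∞) (j : ι) (y : ∀ j, Y j) :
    w j * w j * tailMaximal (T j) (F j) (G j) (y j) ≤
      tailMaximal (fun y j => T j (y j)) (fun y => ∑' i, w i * F i (y i))
        (fun y => ∑' i, w i * G i (y i)) y := by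
  have hsemiconj : Function.Semiconj (fun y : ∀ j, Y j => y j) (fun y j => T j (y j)) (T j) :=
    fun _ => rfl
  refine mul_mul_tailMaximal_le (fun l => ?_) (fun l => ?_) <;>
    rw [← hsemiconj.iterate_right l y] <;>
    exact ENNReal.le_tsum (f := fun i => w i * _) j

theorem stmt_10_general (Y : ℕ → Type*) [∀ j, MeasurableSpace (Y j)]
    (μ : ∀ j, Measure (Y j))
    (T : ∀ j, Y j → Y j) (hT : ∀ j, MeasurePreserving (T j) (μ j) (μ j))
    (μprod : Measure (∀ j, Y j)) [IsProbabilityMeasure μprod]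
    (hmarg : ∀ (j : ℕ) (A : Set (Y j)), MeasurableSet A →
      μprod {y | y j ∈ A} = μ j A)
    (F G : ∀ j, Y j → ℝ≥0∞) (hF : ∀ j, Measurable (F j)) (hG : ∀ j, Measurable (G j))
    (β : ℕ → ℝ) (hβ : ∀ j, 0 < β j) (c : ℕ → ℝ)
    (ε : ℝ≥0∞)
    (hbig : ∀ j, ε < μ j {x | ENNReal.ofReal (c j) ≤
      ⨆ l : ℕ, ⨆ _ : 1 ≤ l, F j ((T j)^[l] x) * G j ((T j)^[2 * l] x) / (l : ℝ≥0∞)})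
    (hβc : Tendsto (fun j => β j * c j) atTop atTop)
    (W Q : (∀ j, Y j) → ℝ≥0∞)
    (hW : ∀ y, W y = ∑' j, ENNReal.ofReal (Real.sqrt (β j)) * F j (y j))
    (hQ : ∀ y, Q y = ∑' j, ENNReal.ofReal (Real.sqrt (β j)) * G j (y j))
    (U : (∀ j, Y j) → ∀ j, Y j) (hU : ∀ y j, U y j = T j (y j)) :
    ε ≤ μprod {y | (⨆ l : ℕ, ⨆ _ : 1 ≤ l,
      W (U^[l] y) * Q (U^[2 * l] y) / (l : ℝ≥0∞)) = ⊤} := by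
  have hTmeas (j : ℕ) : Measurable (T j) := (hT j).measurable
  have hUmeas : Measurable U := by
    rw [show U = fun y j => T j (y j) from funext₂ hU]
    fun_prop
  have hWmeas : Measurable W := by
    rw [funext hW]
    fun_prop
  have hQmeas : Measurable Q := by
    rw [funext hQ]
    fun_prop
  have key (j : ℕ) (y : ∀ j, Y j) :
      ENNReal.ofReal (β j) * tailMaximal (T j) (F j) (G j) (y j) ≤ tailMaximal U W Q y := by
    obtain rfl : U = fun y j => T j (y j) := funext₂ hU
    obtain rfl := funext hW
    obtain rfl := funext hQ
    rw [← Real.mul_self_sqrt (hβ j).le, ENNReal.ofReal_mul (Real.sqrt_nonneg _)]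
    exact mul_self_mul_tailMaximal_le_tailMaximal_tsum T _ F G j y
  refine le_measure_setOf_eq_top (measurable_tailMaximal hUmeas hWmeas hQmeas) fun n => ?_
  obtain ⟨j, hj⟩ := (hβc.eventually_ge_atTop (n : ℝ)).exists
  have hn : (n : ℝ≥0∞) ≤ ENNReal.ofReal (β j) * ENNReal.ofReal (c j) := by
    rw [← ENNReal.ofReal_mul (hβ j).le, ← ENNReal.ofReal_natCast]
    exact ENNReal.ofReal_le_ofReal hj
  let A := {x | ENNReal.ofReal (c j) ≤ tailMaximal (T j) (F j) (G j) x}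
  have hA : MeasurableSet A := measurable_tailMaximal (hTmeas j) (hF j) (hG j) measurableSet_Ici
  calc ε ≤ μ j A := (hbig j).le
    _ = μprod {y | y j ∈ A} := (hmarg j A hA).symm
    _ ≤ _ := measure_mono fun y hy => hn.trans ((mul_le_mul_right hy _).trans (key j y))

/-- Product-system amplification (Section 2.9): if on each coordinate system
the tail maximal function exceeds c_j on a set of measure > ε, with c_j → ∞,
then for W = Σ √β_j F_j, Q = Σ √β_j G_j on the product system (β_j c_j → ∞),
the tail maximal function of (W, Q) is infinite on a set of measure ≥ ε. -/
theorem stmt_10 (Y : ℕ → Type*) [∀ j, MeasurableSpace (Y j)]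
    (μ : ∀ j, Measure (Y j)) [∀ j, IsProbabilityMeasure (μ j)]
    (T : ∀ j, Y j → Y j) (hT : ∀ j, MeasurePreserving (T j) (μ j) (μ j))
    (μprod : Measure (∀ j, Y j)) [IsProbabilityMeasure μprod]
    (hmarg : ∀ (j : ℕ) (A : Set (Y j)), MeasurableSet A →
      μprod {y | y j ∈ A} = μ j A)
    (F G : ∀ j, Y j → ℝ≥0∞) (hF : ∀ j, Measurable (F j)) (hG : ∀ j, Measurable (G j))
    (β : ℕ → ℝ) (hβ : ∀ j, 0 < β j) (c : ℕ → ℝ) (hc : Tendsto c atTop atTop)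
    (ε : ℝ≥0∞)
    (hbig : ∀ j, ε < μ j {x | ENNReal.ofReal (c j) ≤
      ⨆ l : ℕ, ⨆ _ : 1 ≤ l, F j ((T j)^[l] x) * G j ((T j)^[2 * l] x) / (l : ℝ≥0∞)})
    (hβc : Tendsto (fun j => β j * c j) atTop atTop)
    (W Q : (∀ j, Y j) → ℝ≥0∞)
    (hW : ∀ y, W y = ∑' j, ENNReal.ofReal (Real.sqrt (β j)) * F j (y j))
    (hQ : ∀ y, Q y = ∑' j, ENNReal.ofReal (Real.sqrt (β j)) * G j (y j))
    (U : (∀ j, Y j) → ∀ j, Y j) (hU : ∀ y j, U y j = T j (y j)) :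
    ε ≤ μprod {y | (⨆ l : ℕ, ⨆ _ : 1 ≤ l,
      W (U^[l] y) * Q (U^[2 * l] y) / (l : ℝ≥0∞)) = ⊤} :=
  stmt_10_general Y μ T hT μprod hmarg F G hF hG β hβ c ε hbig hβc W Q hW hQ U hU
end
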